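/- Pumping lemma for approximation properties: if a pseudo-run y_{2l−2} →π_{l−1}' y_{2l−1} →π_l y_{2l} ⋯ →π_K y_{2K} satisfies the approximation property A[P, l, INCR, I, +∞], then for all n_l, …, n_K ≥ 1, the pseudo-run induced by the path π_{l−1}' (π_l)^{n_l} π_l' (π_{l+1})^{n_{l+1}} ⋯ (π_K)^{n_K} from y_{2l−2} also satisfies A[P, l, INCR, I, +∞]. -/

import Mathlib

/-- Membership of an integer `d` in an interval given by optional lower bound
`lo` (`none` = `-∞`) and optional upper bound `hi` (`none` = `+∞`). -/
def MemI (lo hi : Option ℤ) (d : ℤ) : Prop :=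
  (∀ u, lo = some u → u ≤ d) ∧ (∀ v, hi = some v → d ≤ v)

/-- Flattened path of the first `r` segments of a decomposed pseudo-run, where
segment `s` consists of the connector path `σ s` followed by the loop `π s`. -/
def pre {n : ℕ} (σ π : ℕ → List (Fin n → ℤ)) (r : ℕ) : List (Fin n → ℤ) :=
  ((List.range r).map fun s => σ s ++ π s).flatten

/-- The pseudo-configuration `x_{2r+1}` (just before loop `π r`). -/
def aConf {n : ℕ} (c₀ : Fin n → ℤ) (σ π : ℕ → List (Fin n → ℤ)) (r : ℕ) :
    Fin n → ℤ :=
  c₀ + (pre σ π r ++ σ r).sum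

/-- The pseudo-configuration `x_{2r+2}` (just after loop `π r`). -/
def bConf {n : ℕ} (c₀ : Fin n → ℤ) (σ π : ℕ → List (Fin n → ℤ)) (r : ℕ) :
    Fin n → ℤ :=
  c₀ + (pre σ π (r + 1)).sum

/-- The pseudo-configuration at offset `i` inside segment `r`. -/
def conf {n : ℕ} (c₀ : Fin n → ℤ) (σ π : ℕ → List (Fin n → ℤ)) (r i : ℕ) :
    Fin n → ℤ :=
  c₀ + (pre σ π r ++ (σ r ++ π r).take i).sum

/-- The approximation property `A[P, l, INCR, I, +∞]` for a decomposed
pseudo-run with `M + 1` loop segments (segments reindexed from `0`), for the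
generalized unboundedness property `P` given by interval bounds `lo`, `hi`:
(transitions in `T`); (P1') the effect of each loop `π r` lies in the
corresponding intervals; (P2') a negative effect on component `j` at stage `r`
implies `j ∈ INCR` or an earlier stage with positive effect on `j`;
(P3') with bound `+∞`: every pseudo-configuration strictly before the end of
segment `r` is nonnegative on every `j ∈ I` with `j ∉ INCR` and with no
earlier stage of positive effect on `j`. -/
def SatA {n : ℕ} (T : Finset (Fin n → ℤ)) (M : ℕ) (INCR I : Finset (Fin n))
    (lo hi : ℕ → Fin n → Option ℤ) (c₀ : Fin n → ℤ)
    (σ π : ℕ → List (Fin n → ℤ)) : Prop :=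
  (∀ r ≤ M, ∀ t ∈ σ r ++ π r, t ∈ T) ∧
  (∀ r ≤ M, ∀ j, MemI (lo r j) (hi r j) (bConf c₀ σ π r j - aConf c₀ σ π r j)) ∧
  (∀ r ≤ M, ∀ j, bConf c₀ σ π r j - aConf c₀ σ π r j < 0 →
      j ∈ INCR ∨ ∃ r' < r, 0 < bConf c₀ σ π r' j - aConf c₀ σ π r' j) ∧
  (∀ r ≤ M, ∀ i < (σ r ++ π r).length, ∀ j ∈ I, j ∉ INCR →
      (∀ r' < r, ¬ 0 < bConf c₀ σ π r' j - aConf c₀ σ π r' j) →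
      0 ≤ conf c₀ σ π r i j)

/-- Weak satisfaction of a generalized unboundedness property `P` (given by
interval bounds `lo`, `hi`) by a decomposed pseudo-run with `M + 1` loop
segments: (transitions in `T`); (P1) the effect of loop `π r` lies in the
corresponding intervals; (P2) a negative effect on `j` at stage `r` implies an
earlier stage with positive effect on `j`; (P3) every pseudo-configuration with
a negative `j`-th entry occurs after some stage with positive effect on `j`. -/
def WeakSat {n : ℕ} (T : Finset (Fin n → ℤ)) (M : ℕ)
    (lo hi : ℕ → Fin n → Option ℤ) (c₀ : Fin n → ℤ)
    (σ π : ℕ → List (Fin n → ℤ)) : Prop :=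
  (∀ r ≤ M, ∀ t ∈ σ r ++ π r, t ∈ T) ∧
  (∀ r ≤ M, ∀ j, MemI (lo r j) (hi r j) (bConf c₀ σ π r j - aConf c₀ σ π r j)) ∧
  (∀ r ≤ M, ∀ j, bConf c₀ σ π r j - aConf c₀ σ π r j < 0 →
      ∃ r' < r, 0 < bConf c₀ σ π r' j - aConf c₀ σ π r' j) ∧
  (∀ r ≤ M, ∀ i < (σ r ++ π r).length, ∀ j, conf c₀ σ π r i j < 0 →
      ∃ r' < r, 0 < bConf c₀ σ π r' j - aConf c₀ σ π r' j)

/-!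
Pumping leaves the effect `bConf − aConf = (π r).sum` of every loop unchanged, so (P1') and
(P2') transfer verbatim. For (P3'), take a component `j ∉ INCR` with no earlier positive loop
effect: by (P2') all earlier loops have zero effect on `j` and the current one a nonnegative
effect. So the extra copies of earlier loops do not move `j`, and every configuration inside
the pumped segment is a configuration of the original segment plus some copies of a
nonnegative effect.
-/

lemma pre_succ {n : ℕ} (σ π : ℕ → List (Fin n → ℤ)) (r : ℕ) :
    pre σ π (r + 1) = pre σ π r ++ (σ r ++ π r) := by
  simp [pre, List.range_succ]

lemma bConf_sub_aConf_apply {n : ℕ} (c₀ : Fin n → ℤ) (σ π : ℕ → List (Fin n → ℤ)) (r : ℕ)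
    (j : Fin n) : bConf c₀ σ π r j - aConf c₀ σ π r j = (π r).sum j := by
  simp [bConf, aConf, pre_succ]

lemma conf_apply {n : ℕ} (c₀ : Fin n → ℤ) (σ π : ℕ → List (Fin n → ℤ)) (r i : ℕ) (j : Fin n) :
    conf c₀ σ π r i j =
      c₀ j + (pre σ π r).sum j + (((σ r ++ π r).map (· j)).take i).sum := by
  simp only [conf, List.sum_append, Pi.add_apply, Pi.list_sum_apply, List.map_take, add_assoc]

/-- The connector of segment `r` after its loop is repeated `e r` times; the last copy remains
the loop of the segment. -/
def pumpedConnector {n : ℕ} (σ π : ℕ → List (Fin n → ℤ)) (e : ℕ → ℕ) (r : ℕ) :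
    List (Fin n → ℤ) :=
  σ r ++ (List.replicate (e r - 1) (π r)).flatten

lemma sum_pre_pumpedConnector {n : ℕ} (σ π : ℕ → List (Fin n → ℤ)) (e : ℕ → ℕ) (r : ℕ) :
    (pre (pumpedConnector σ π e) π r).sum =
      (pre σ π r).sum + ∑ s ∈ Finset.range r, (e s - 1) • (π s).sum := by
  induction r with
  | zero => simp [pre]
  | succ r ih =>
    simp only [pre_succ, List.sum_append, ih, pumpedConnector, List.sum_flatten,
      List.map_replicate, List.sum_replicate, Finset.sum_range_succ]
    abel

lemma mem_of_mem_pumpedConnector_append {n : ℕ} {σ π : ℕ → List (Fin n → ℤ)} {e : ℕ → ℕ}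
    {r : ℕ} {t : Fin n → ℤ} (ht : t ∈ pumpedConnector σ π e r ++ π r) : t ∈ σ r ++ π r := by
  simp only [pumpedConnector, List.mem_append, List.mem_flatten, List.mem_replicate] at ht ⊢
  rcases ht with (ht | ⟨_, ⟨_, rfl⟩, ht⟩) | ht <;> simp [ht]

section PrefixSums

variable {α : Type*} [AddCommMonoid α] [PartialOrder α] [IsOrderedAddMonoid α]

lemma add_sum_take_append_nonneg {c : α} {L B : List α} (hB : 0 ≤ B.sum)
    (h : ∀ i < (L ++ B).length, 0 ≤ c + ((L ++ B).take i).sum) :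
    ∀ i < (L ++ B ++ B).length, 0 ≤ c + ((L ++ B ++ B).take i).sum := by
  intro i hi
  rcases lt_or_ge i (L ++ B).length with hlt | hge
  · rw [List.take_append_of_le_length hlt.le]
    exact h i hlt
  · obtain ⟨d, rfl⟩ := Nat.exists_eq_add_of_le hge
    have hd : d < B.length := by simp at hi; omega
    have hprefix := h (L.length + d) (by simp; omega)
    rw [List.take_length_add_append, List.sum_append] at hprefix
    rw [List.take_length_add_append, List.sum_append, List.sum_append]
    calc (0 : α) ≤ c + (L.sum + (B.take d).sum) + B.sum := add_nonneg hprefix hB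
      _ = c + (L.sum + B.sum + (B.take d).sum) := by abel

lemma add_sum_take_append_flatten_replicate_nonneg {c : α} {L B : List α} (hB : 0 ≤ B.sum)
    (h : ∀ i < (L ++ B).length, 0 ≤ c + ((L ++ B).take i).sum) (m : ℕ) :
    ∀ i < (L ++ (List.replicate m B).flatten ++ B).length,
      0 ≤ c + ((L ++ (List.replicate m B).flatten ++ B).take i).sum := by
  induction m with
  | zero => simpa using h
  | succ m ih =>
    rw [List.replicate_succ', List.flatten_append, List.flatten_singleton, ← List.append_assoc]
    exact add_sum_take_append_nonneg hB ih

end PrefixSums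

lemma nonneg_of_forall_neg_exists_pos {β : Type*} [LinearOrder β] [Zero β] {d : ℕ → β} {M r : ℕ}
    (hd : ∀ s ≤ M, d s < 0 → ∃ s' < s, 0 < d s') (hr : r ≤ M) (hpos : ∀ s < r, ¬ 0 < d s) :
    ∀ s ≤ r, 0 ≤ d s := by
  intro s hs
  by_contra! hneg
  obtain ⟨s', hs', hpos'⟩ := hd s (hs.trans hr) hneg
  exact hpos s' (hs'.trans_le hs) hpos'

lemma conf_pumpedConnector_nonneg {n : ℕ} (c₀ : Fin n → ℤ) (σ π : ℕ → List (Fin n → ℤ))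
    (e : ℕ → ℕ) {r : ℕ} {j : Fin n} (hzero : ∀ s < r, (π s).sum j = 0)
    (hloop : 0 ≤ (π r).sum j) (h : ∀ i < (σ r ++ π r).length, 0 ≤ conf c₀ σ π r i j) :
    ∀ i < (pumpedConnector σ π e r ++ π r).length,
      0 ≤ conf c₀ (pumpedConnector σ π e) π r i j := by
  have hpre : (pre (pumpedConnector σ π e) π r).sum j = (pre σ π r).sum j := by
    rw [sum_pre_pumpedConnector, Pi.add_apply, Finset.sum_apply,
      Finset.sum_eq_zero fun s hs => by simp [hzero s (Finset.mem_range.1 hs)], add_zero]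
  simp only [conf_apply, hpre] at h ⊢
  have := add_sum_take_append_flatten_replicate_nonneg (L := (σ r).map (· j))
    (B := (π r).map (· j)) (by rwa [← Pi.list_sum_apply]) (by simpa using h) (e r - 1)
  simpa [pumpedConnector, List.map_flatten, List.map_replicate] using this

theorem satA_pumping_general (n M : ℕ) (T : Finset (Fin n → ℤ))
    (INCR I : Finset (Fin n)) (lo hi : ℕ → Fin n → Option ℤ)
    (c₀ : Fin n → ℤ) (σ π : ℕ → List (Fin n → ℤ))
    (h : SatA T M INCR I lo hi c₀ σ π)
    (e : ℕ → ℕ) :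
    SatA T M INCR I lo hi c₀
      (fun r => σ r ++ (List.replicate (e r - 1) (π r)).flatten) π := by
  obtain ⟨hT, hP1, hP2, hP3⟩ := h
  simp only [SatA, bConf_sub_aConf_apply] at hP1 hP2 hP3 ⊢
  refine ⟨?_, hP1, hP2, ?_⟩
  · exact fun r hr t ht => hT r hr t (mem_of_mem_pumpedConnector_append ht)
  · intro r hr i hi j hjI hjINCR hpos
    have hnonneg := nonneg_of_forall_neg_exists_pos
      (fun s hs hneg => (hP2 s hs j hneg).resolve_left hjINCR) hr hpos
    exact conf_pumpedConnector_nonneg c₀ σ π e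
      (fun s hs => le_antisymm (not_lt.1 (hpos s hs)) (hnonneg s hs.le)) (hnonneg r le_rfl)
      (fun i hi => hP3 r hr i hi j hjI hjINCR hpos) i hi

/-- Pumping lemma for approximation properties: if a decomposed
pseudo-run `y_{2l−2} →σ_l y_{2l−1} →π_l y_{2l} ⋯ →π_K y_{2K}` (segments
reindexed from `0` to `M`) satisfies the approximation property
`A[P, l, INCR, I, +∞]`, then for all `e_0, …, e_M ≥ 1`, the pseudo-run induced
by the pumped path `σ_0 (π_0)^{e_0} σ_1 (π_1)^{e_1} ⋯ (π_M)^{e_M}` also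
satisfies `A[P, l, INCR, I, +∞]` (witnessed by the decomposition that places
each cut just before the last copy of each loop, so that the connector of
segment `r` becomes `σ r` followed by `e r − 1` copies of `π r`, whose
flattened path is exactly the pumped path). -/
theorem satA_pumping (n M : ℕ) (T : Finset (Fin n → ℤ))
    (INCR I : Finset (Fin n)) (lo hi : ℕ → Fin n → Option ℤ)
    (c₀ : Fin n → ℤ) (σ π : ℕ → List (Fin n → ℤ))
    (h : SatA T M INCR I lo hi c₀ σ π)
    (e : ℕ → ℕ) (he : ∀ r ≤ M, 1 ≤ e r) :
    SatA T M INCR I lo hi c₀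
      (fun r => σ r ++ (List.replicate (e r - 1) (π r)).flatten) π :=
  satA_pumping_general n M T INCR I lo hi c₀ σ π h e
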